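/- Let α be a real number with 0 < α < π and let ξ > 0 be real. Then the function t ↦ F̃(t,α) is differentiable at ξ, and its derivative equals (cosh((2π−α)ξ) − cosh(αξ))·((2π−α)·sinh(αξ) − α·sinh((2π−α)ξ)) / (1 − cosh(αξ)·cosh((2π−α)ξ))². -/

import Mathlib

open Real

/-!
This is the quotient rule for `sinh (a t) sinh (b t) / (1 - cosh (a t) cosh (b t))`, whose
numerator collapses, by `cosh² - sinh² = 1`, to
`(cosh (b x) - cosh (a x)) (b sinh (a x) - a sinh (b x))`. The denominator vanishes only when
`a x = b x = 0`, so it is nonzero as soon as `α ξ ≠ 0`.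
-/

/-- The hyperbolic dispersion function of the corner transmission problem. -/
noncomputable def Ftilde (ξ α : ℝ) : ℝ :=
  Real.sinh (α * ξ) * Real.sinh ((2 * Real.pi - α) * ξ) /
    (1 - Real.cosh (α * ξ) * Real.cosh ((2 * Real.pi - α) * ξ))

theorem Real.one_lt_cosh_mul_cosh {u : ℝ} (hu : u ≠ 0) (v : ℝ) : 1 < cosh u * cosh v :=
  one_lt_mul_of_lt_of_le (one_lt_cosh.mpr hu) (one_le_cosh v)

theorem Real.hasDerivAt_sinh_const_mul (a x : ℝ) :
    HasDerivAt (fun t => sinh (a * t)) (a * cosh (a * x)) x := by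
  simpa [mul_comm] using ((hasDerivAt_id x).const_mul a).sinh

theorem Real.hasDerivAt_cosh_const_mul (a x : ℝ) :
    HasDerivAt (fun t => cosh (a * t)) (a * sinh (a * x)) x := by
  simpa [mul_comm] using ((hasDerivAt_id x).const_mul a).cosh

theorem Real.hasDerivAt_sinh_mul_sinh_div_one_sub_cosh_mul_cosh (a b x : ℝ)
    (hx : 1 - cosh (a * x) * cosh (b * x) ≠ 0) :
    HasDerivAt (fun t => sinh (a * t) * sinh (b * t) / (1 - cosh (a * t) * cosh (b * t)))
      ((cosh (b * x) - cosh (a * x)) * (b * sinh (a * x) - a * sinh (b * x)) /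
        (1 - cosh (a * x) * cosh (b * x)) ^ 2) x := by
  have hnum := (hasDerivAt_sinh_const_mul a x).mul (hasDerivAt_sinh_const_mul b x)
  have hden := (hasDerivAt_const x (1 : ℝ)).sub
    ((hasDerivAt_cosh_const_mul a x).mul (hasDerivAt_cosh_const_mul b x))
  have hnumerator :
      (a * cosh (a * x) * sinh (b * x) + sinh (a * x) * (b * cosh (b * x))) *
          (1 - cosh (a * x) * cosh (b * x)) -
        sinh (a * x) * sinh (b * x) *
          (0 - (a * sinh (a * x) * cosh (b * x) + cosh (a * x) * (b * sinh (b * x)))) =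
        (cosh (b * x) - cosh (a * x)) * (b * sinh (a * x) - a * sinh (b * x)) := by
    linear_combination (-(a * sinh (b * x) * cosh (b * x))) * cosh_sq_sub_sinh_sq (a * x) -
      (b * sinh (a * x) * cosh (a * x)) * cosh_sq_sub_sinh_sq (b * x)
  rw [← hnumerator]
  exact hnum.div hden hx

theorem hyperbolic_dispersion_hasDerivAt_general
    (α : ℝ) (hα0 : 0 < α)
    (ξ : ℝ) (hξ : 0 < ξ) :
    HasDerivAt (fun t => Ftilde t α)
      ((Real.cosh ((2 * Real.pi - α) * ξ) - Real.cosh (α * ξ)) *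
        ((2 * Real.pi - α) * Real.sinh (α * ξ) - α * Real.sinh ((2 * Real.pi - α) * ξ)) /
        (1 - Real.cosh (α * ξ) * Real.cosh ((2 * Real.pi - α) * ξ)) ^ 2) ξ := by
  have hden : 1 - cosh (α * ξ) * cosh ((2 * π - α) * ξ) ≠ 0 :=
    (sub_neg.mpr (one_lt_cosh_mul_cosh (mul_pos hα0 hξ).ne' _)).ne
  exact hasDerivAt_sinh_mul_sinh_div_one_sub_cosh_mul_cosh α (2 * π - α) ξ hden

theorem hyperbolic_dispersion_hasDerivAt
    (α : ℝ) (hα0 : 0 < α) (hαπ : α < Real.pi)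
    (ξ : ℝ) (hξ : 0 < ξ) :
    HasDerivAt (fun t => Ftilde t α)
      ((Real.cosh ((2 * Real.pi - α) * ξ) - Real.cosh (α * ξ)) *
        ((2 * Real.pi - α) * Real.sinh (α * ξ) - α * Real.sinh ((2 * Real.pi - α) * ξ)) /
        (1 - Real.cosh (α * ξ) * Real.cosh ((2 * Real.pi - α) * ξ)) ^ 2) ξ :=
  hyperbolic_dispersion_hasDerivAt_general α hα0 ξ hξ
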